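/- arXiv:2507.11996 — 6 statements merged into one kernel-verified Lean document; each statement's English description precedes it below -/
import Mathlib

section
/- Let A be a Banach *-algebra and a ∈ A. If there exists x ∈ A with ax² = x, a²x = axa, and a − axa quasinilpotent, then setting z = xax one has az² = z = zaz, a²z = aza, and a − aza is quasinilpotent. In particular a has a generalized right Drazin inverse. -/
open Filter Topology

/-- `q` is quasinilpotent: `‖qⁿ‖^{1/n} → 0`. -/
def Quasinilpotent {A : Type*} [NormedRing A] (q : A) : Prop :=
  Tendsto (fun n : ℕ => ‖q ^ n‖ ^ (1 / (n : ℝ))) atTop (𝓝 0)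

/-!
Everything except quasinilpotence is monoid algebra driven by `a x x = x` and `a a x = a x a`.
The key identity is `a (x a x) a = a x a`, so `a - a z a` is literally `a - a x a` for
`z = x a x`, and quasinilpotence is inherited unchanged.
-/

namespace WeakRightDrazin

variable {M : Type*} [Monoid M] {a x : M}

theorem axaxa_eq (h1 : a * x ^ 2 = x) (h2 : a ^ 2 * x = a * x * a) :
    a * x * a * x * a = a * x * a :=
  calc a * x * a * x * a = a ^ 2 * x * x * a := by rw [← h2]
    _ = a * (a * x ^ 2) * a := by simp only [sq, mul_assoc]
    _ = a * x * a := by rw [h1]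

theorem mul_xax_mul (h1 : a * x ^ 2 = x) (h2 : a ^ 2 * x = a * x * a) :
    a * (x * a * x) * a = a * x * a := by
  simpa only [mul_assoc] using axaxa_eq h1 h2

theorem mul_xax_sq (h1 : a * x ^ 2 = x) :
    a * (x * a * x) ^ 2 = x * a * x :=
  calc a * (x * a * x) ^ 2 = a * x * (a * x ^ 2) * a * x := by simp only [sq, mul_assoc]
    _ = a * x * x * a * x := by rw [h1]
    _ = a * x ^ 2 * a * x := by simp only [sq, mul_assoc]
    _ = x * a * x := by rw [h1]

theorem xax_mul_ax (h1 : a * x ^ 2 = x) (h2 : a ^ 2 * x = a * x * a) :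
    x * a * x * a * x = x * a * x :=
  calc x * a * x * a * x = x * (a * x * a) * x := by simp only [mul_assoc]
    _ = x * a * (a * x ^ 2) := by rw [← h2]; simp only [sq, mul_assoc]
    _ = x * a * x := by rw [h1]

theorem xax_mul_xax (h1 : a * x ^ 2 = x) (h2 : a ^ 2 * x = a * x * a) :
    x * a * x * a * (x * a * x) = x * a * x :=
  calc x * a * x * a * (x * a * x) = x * a * x * a * x * a * x := by simp only [mul_assoc]
    _ = x * a * x := by rw [xax_mul_ax h1 h2, xax_mul_ax h1 h2]

theorem sq_mul_xax (h1 : a * x ^ 2 = x) (h2 : a ^ 2 * x = a * x * a) :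
    a ^ 2 * (x * a * x) = a * (x * a * x) * a :=
  calc a ^ 2 * (x * a * x) = a ^ 2 * x * a * x := by simp only [mul_assoc]
    _ = a * x * a * a * x := by rw [h2]
    _ = a * x * (a ^ 2 * x) := by simp only [sq, mul_assoc]
    _ = a * x * (a * x * a) := by rw [h2]
    _ = a * x * a * x * a := by simp only [mul_assoc]
    _ = a * (x * a * x) * a := by rw [axaxa_eq h1 h2, mul_xax_mul h1 h2]

end WeakRightDrazin

open WeakRightDrazin in
theorem generalized_right_drazin_of_weak_general
    {A : Type*} [NormedRing A]
    (a x : A) (h1 : a * x ^ 2 = x) (h2 : a ^ 2 * x = a * x * a)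
    (h3 : Quasinilpotent (a - a * x * a)) :
    (a * (x * a * x) ^ 2 = x * a * x ∧ (x * a * x) * a * (x * a * x) = x * a * x ∧
      a ^ 2 * (x * a * x) = a * (x * a * x) * a ∧
      Quasinilpotent (a - a * (x * a * x) * a)) ∧
    (∃ z : A, a * z ^ 2 = z ∧ z * a * z = z ∧ a ^ 2 * z = a * z * a ∧
      Quasinilpotent (a - a * z * a)) := by
  have hz : a * (x * a * x) ^ 2 = x * a * x ∧ (x * a * x) * a * (x * a * x) = x * a * x ∧
      a ^ 2 * (x * a * x) = a * (x * a * x) * a ∧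
      Quasinilpotent (a - a * (x * a * x) * a) :=
    ⟨mul_xax_sq h1, xax_mul_xax h1 h2, sq_mul_xax h1 h2, by rwa [mul_xax_mul h1 h2]⟩
  exact ⟨hz, _, hz⟩

/-- If ax² = x, a²x = axa and a − axa is quasinilpotent, then z = xax
satisfies az² = z = zaz, a²z = aza, and a − aza is quasinilpotent; in particular
`a` has a generalized right Drazin inverse. -/
theorem generalized_right_drazin_of_weak
    {A : Type*} [NormedRing A] [StarRing A] [NormedAlgebra ℂ A] [CompleteSpace A]
    (a x : A) (h1 : a * x ^ 2 = x) (h2 : a ^ 2 * x = a * x * a)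
    (h3 : Quasinilpotent (a - a * x * a)) :
    (a * (x * a * x) ^ 2 = x * a * x ∧ (x * a * x) * a * (x * a * x) = x * a * x ∧
      a ^ 2 * (x * a * x) = a * (x * a * x) * a ∧
      Quasinilpotent (a - a * (x * a * x) * a)) ∧
    (∃ z : A, a * z ^ 2 = z ∧ z * a * z = z ∧ a ^ 2 * z = a * z * a ∧
      Quasinilpotent (a - a * z * a)) :=
  generalized_right_drazin_of_weak_general a x h1 h2 h3
end

section
/- Let A be a Banach algebra and a, x ∈ A with ax² = x, a²x = axa, and a − axa quasinilpotent. Then (a − axa)ⁿ = aⁿ − axaⁿ for all n ≥ 1, and consequently lim_{n→∞} ‖aⁿ − axaⁿ‖^{1/n} = 0. -/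
open Filter Topology

/-!
With `p = a x`, the hypothesis `a²x = axa` says exactly that `a` commutes with `p`, and together
with `ax² = x` it makes `p` idempotent. Hence `a - axa = (1 - p) a` with `1 - p` an idempotent
commuting with `a`, so `(a - axa)ⁿ = (1 - p) aⁿ = aⁿ - axaⁿ` for `n ≥ 1`; the limit is then the
quasinilpotency of `a - axa`.
-/

theorem IsIdempotentElem.mul_pow_of_commute {M : Type*} [Monoid M] {p a : M}
    (hp : IsIdempotentElem p) (hpa : Commute p a) {n : ℕ} (hn : n ≠ 0) :
    (p * a) ^ n = p * a ^ n := by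
  rw [hpa.mul_pow, hp.pow_eq hn]

section

variable {R : Type*} [Ring R] {a x : R}

theorem commute_self_mul_of_sq_mul_eq (h2 : a ^ 2 * x = a * x * a) : Commute a (a * x) := by
  rw [Commute, SemiconjBy, ← mul_assoc, ← sq, h2]

theorem isIdempotentElem_mul_of_mul_sq_eq (h1 : a * x ^ 2 = x) (h2 : a ^ 2 * x = a * x * a) :
    IsIdempotentElem (a * x) :=
  calc a * x * (a * x) = a * x * a * x := by rw [← mul_assoc]
    _ = a * (a * x ^ 2) := by rw [← h2, sq, sq]; noncomm_ring
    _ = a * x := by rw [h1]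

theorem sub_mul_mul_self_pow_eq (h1 : a * x ^ 2 = x) (h2 : a ^ 2 * x = a * x * a) {n : ℕ}
    (hn : n ≠ 0) : (a - a * x * a) ^ n = a ^ n - a * x * a ^ n := by
  have hp := (isIdempotentElem_mul_of_mul_sq_eq h1 h2).one_sub
  have hpa : Commute (1 - a * x) a :=
    (Commute.one_left a).sub_left (commute_self_mul_of_sq_mul_eq h2).symm
  calc (a - a * x * a) ^ n = ((1 - a * x) * a) ^ n := by rw [sub_mul, one_mul]
    _ = (1 - a * x) * a ^ n := hp.mul_pow_of_commute hpa hn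
    _ = a ^ n - a * x * a ^ n := by rw [sub_mul, one_mul]

end

theorem pow_sub_eq_and_tendsto_general
    {A : Type*} [NormedRing A]
    (a x : A) (h1 : a * x ^ 2 = x) (h2 : a ^ 2 * x = a * x * a)
    (h3 : Quasinilpotent (a - a * x * a)) :
    (∀ n : ℕ, 1 ≤ n → (a - a * x * a) ^ n = a ^ n - a * x * a ^ n) ∧
      Tendsto (fun n : ℕ => ‖a ^ n - a * x * a ^ n‖ ^ (1 / (n : ℝ))) atTop (𝓝 0) := by
  have hpow : ∀ n : ℕ, 1 ≤ n → (a - a * x * a) ^ n = a ^ n - a * x * a ^ n :=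
    fun n hn => sub_mul_mul_self_pow_eq h1 h2 (Nat.one_le_iff_ne_zero.mp hn)
  refine ⟨hpow, h3.congr' ?_⟩
  filter_upwards [eventually_ge_atTop 1] with n hn using by rw [hpow n hn]

/-- If ax² = x, a²x = axa and a − axa is quasinilpotent, then
(a − axa)ⁿ = aⁿ − axaⁿ for all n ≥ 1, and hence ‖aⁿ − axaⁿ‖^{1/n} → 0. -/
theorem pow_sub_eq_and_tendsto
    {A : Type*} [NormedRing A] [NormedAlgebra ℂ A] [CompleteSpace A]
    (a x : A) (h1 : a * x ^ 2 = x) (h2 : a ^ 2 * x = a * x * a)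
    (h3 : Quasinilpotent (a - a * x * a)) :
    (∀ n : ℕ, 1 ≤ n → (a - a * x * a) ^ n = a ^ n - a * x * a ^ n) ∧
      Tendsto (fun n : ℕ => ‖a ^ n - a * x * a ^ n‖ ^ (1 / (n : ℝ))) atTop (𝓝 0) :=
  pow_sub_eq_and_tendsto_general a x h1 h2 h3
end

section
/- Let A be a Banach algebra, a ∈ A an element having a generalized right Drazin inverse x (i.e., ax² = x = xax, a²x = axa, a − axa quasinilpotent), and b ∈ A quasinilpotent with ba = 0. Then a + b has a generalized right Drazin inverse, given by y = x(1 + Σ_{n=1}^∞ xⁿbⁿ). -/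
/-!
Put `T = ∑ xⁿbⁿ`, so that `y = x T` and `T = 1 + x T b`. From `ba = 0` and `x = a x²` we get
`bx = 0`, so `T c = c` whenever `b c = 0`; in particular `T x = x` and `T a = a`, which turns
the three algebraic identities for `y` into consequences of those for `x`. Moreover
`(a + b) - (a + b) y (a + b) = q + r` with `q = a - a x a` and `r = (1 - a x T) b`. Here `r` is
quasinilpotent because `b (1 - a x T) = b` and `cd`, `dc` have the same nonzero spectrum, and
`r q = 0`, so `(μ - r)(μ - q) = μ (μ - (q + r))` shows that `q + r` has no nonzero spectrum
either.
-/

open Filter Topology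

theorem Quasinilpotent.eventually_norm_pow_le {A : Type*} [NormedRing A] {b : A}
    (hb : Quasinilpotent b) {ε : ℝ} (hε : 0 < ε) : ∀ᶠ n in atTop, ‖b ^ n‖ ≤ ε ^ n := by
  filter_upwards [hb.eventually (gt_mem_nhds hε), eventually_ge_atTop 1] with n hn hn1
  have hn0 : (n : ℝ) ≠ 0 := by positivity
  calc ‖b ^ n‖ = (‖b ^ n‖ ^ (1 / (n : ℝ))) ^ n := by
        rw [← Real.rpow_natCast, ← Real.rpow_mul (norm_nonneg _), one_div_mul_cancel hn0,
          Real.rpow_one]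
    _ ≤ ε ^ n := by gcongr

theorem Quasinilpotent.summable_pow_mul_pow {A : Type*} [NormedRing A] [CompleteSpace A]
    {b : A} (hb : Quasinilpotent b) (x : A) : Summable fun n : ℕ => x ^ n * b ^ n := by
  set ε : ℝ := 1 / (2 * (‖x‖ + 1))
  have hε : 0 < ε := by positivity
  refine .of_norm_bounded_eventually_nat summable_geometric_two ?_
  filter_upwards [hb.eventually_norm_pow_le hε, eventually_ge_atTop 1] with n hbn hn
  calc ‖x ^ n * b ^ n‖ ≤ ‖x‖ ^ n * ε ^ n :=
        (norm_mul_le _ _).trans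
          (mul_le_mul (norm_pow_le' x hn) hbn (norm_nonneg _) (by positivity))
    _ ≤ ((‖x‖ + 1) * ε) ^ n := by rw [mul_pow]; gcongr; linarith
    _ = (1 / 2) ^ n := by congr 1; simp only [ε]; field_simp

section TopologicalRing

variable {A : Type*} [Ring A] [TopologicalSpace A] [IsTopologicalRing A] [T2Space A] {x b : A}

theorem tsum_pow_mul_pow_eq_one_add (hs : Summable fun n : ℕ => x ^ n * b ^ n) :
    ∑' n : ℕ, x ^ n * b ^ n = 1 + ∑' n : ℕ, x ^ (n + 1) * b ^ (n + 1) := by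
  rw [hs.tsum_eq_zero_add, pow_zero, pow_zero, one_mul]

theorem tsum_pow_mul_pow_eq_one_add_mul_tsum_mul (hs : Summable fun n : ℕ => x ^ n * b ^ n) :
    ∑' n : ℕ, x ^ n * b ^ n = 1 + x * (∑' n : ℕ, x ^ n * b ^ n) * b :=
  calc ∑' n : ℕ, x ^ n * b ^ n = 1 + ∑' n : ℕ, x ^ (n + 1) * b ^ (n + 1) :=
        tsum_pow_mul_pow_eq_one_add hs
    _ = 1 + ∑' n : ℕ, x * (x ^ n * b ^ n) * b := by
        simp only [pow_succ' x, pow_succ b, mul_assoc]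
    _ = 1 + x * (∑' n : ℕ, x ^ n * b ^ n) * b := by
        rw [(hs.mul_left x).tsum_mul_right, hs.tsum_mul_left]

end TopologicalRing

theorem spectralRadius_eq_zero_iff {𝕜 A : Type*} [NormedField 𝕜] [Ring A] [Algebra 𝕜 A]
    {a : A} : spectralRadius 𝕜 a = 0 ↔ spectrum 𝕜 a ⊆ {0} := by
  simp [spectralRadius, Set.subset_def]

section Banach

variable {A : Type*} [NormedRing A] [NormedAlgebra ℂ A] [CompleteSpace A]

theorem quasinilpotent_iff_spectralRadius_eq_zero {q : A} :
    Quasinilpotent q ↔ spectralRadius ℂ q = 0 := by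
  have gelfand := spectrum.pow_norm_pow_one_div_tendsto_nhds_spectralRadius q
  constructor
  · intro h
    exact tendsto_nhds_unique gelfand (by simpa using ENNReal.tendsto_ofReal h)
  · intro h
    rw [h] at gelfand
    have hnonneg (n : ℕ) : 0 ≤ ‖q ^ n‖ ^ (1 / (n : ℝ)) := by positivity
    have := (ENNReal.tendsto_toReal ENNReal.zero_ne_top).comp gelfand
    simp only [Function.comp_def, ENNReal.toReal_ofReal (hnonneg _), ENNReal.toReal_zero] at this
    exact this

theorem quasinilpotent_iff_spectrum_subset {q : A} : Quasinilpotent q ↔ spectrum ℂ q ⊆ {0} :=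
  quasinilpotent_iff_spectralRadius_eq_zero.trans spectralRadius_eq_zero_iff

theorem Quasinilpotent.mul_comm {b c : A} (h : Quasinilpotent (b * c)) :
    Quasinilpotent (c * b) := by
  rw [quasinilpotent_iff_spectrum_subset] at h ⊢
  intro μ hμ
  by_contra hμ0
  have hμ' : μ ∈ spectrum ℂ (b * c) \ {0} := by
    rw [spectrum.nonzero_mul_comm]
    exact ⟨hμ, hμ0⟩
  exact hμ'.2 (h hμ'.1)

theorem Quasinilpotent.add_of_mul_eq_zero {q r : A} (hq : Quasinilpotent q)
    (hr : Quasinilpotent r) (hrq : r * q = 0) : Quasinilpotent (q + r) := by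
  rw [quasinilpotent_iff_spectrum_subset] at hq hr ⊢
  intro μ hμ
  by_contra hμ0
  have hμq : IsUnit (algebraMap ℂ A μ - q) := spectrum.notMem_iff.mp fun h => hμ0 (hq h)
  have hμr : IsUnit (algebraMap ℂ A μ - r) := spectrum.notMem_iff.mp fun h => hμ0 (hr h)
  have factor : (algebraMap ℂ A μ - r) * (algebraMap ℂ A μ - q)
      = μ • (algebraMap ℂ A μ - (q + r)) := by
    rw [Algebra.algebraMap_eq_smul_one]
    simp only [sub_mul, mul_sub, smul_mul_assoc, mul_smul_comm, one_mul, mul_one, hrq]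
    module
  have hunit : IsUnit (μ • (algebraMap ℂ A μ - (q + r))) := factor ▸ hμr.mul hμq
  exact spectrum.mem_iff.mp hμ ((isUnit_smul_iff (Units.mk0 μ hμ0) _).mp hunit)

end Banach

theorem mul_eq_self_of_eq_one_add_mul_mul {A : Type*} [Ring A] {x b T c : A}
    (hT : T = 1 + x * T * b) (hbc : b * c = 0) : T * c = c := by
  rw [hT, add_mul, one_mul, mul_assoc, hbc, mul_zero, add_zero]

structure IsGenRightDrazinInverse {A : Type*} [NormedRing A] (a x : A) : Prop where
  mul_sq : a * x ^ 2 = x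
  mul_mul_self : x * a * x = x
  sq_mul : a ^ 2 * x = a * x * a
  quasinilpotent : Quasinilpotent (a - a * x * a)

theorem IsGenRightDrazinInverse.add_of_eq_one_add_mul_mul {A : Type*} [NormedRing A]
    [NormedAlgebra ℂ A] [CompleteSpace A] {a x b T : A} (h : IsGenRightDrazinInverse a x)
    (hb : Quasinilpotent b) (hba : b * a = 0) (hT : T = 1 + x * T * b) :
    IsGenRightDrazinInverse (a + b) (x * T) := by
  have hbx : b * x = 0 := by rw [← h.mul_sq, ← mul_assoc, hba, zero_mul]
  have hTx : T * x = x := mul_eq_self_of_eq_one_add_mul_mul hT hbx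
  have hTa : T * a = a := mul_eq_self_of_eq_one_add_mul_mul hT hba
  have hp : (a + b) * (x * T) = a * x * T := by
    rw [add_mul, ← mul_assoc b, hbx, zero_mul, add_zero, mul_assoc]
  have hpab : (a + b) * (x * T) * (a + b) = a * x * a + a * x * T * b := by
    rw [hp, mul_add, mul_assoc _ T a, hTa]
  refine ⟨?_, ?_, ?_, ?_⟩
  · calc (a + b) * (x * T) ^ 2 = a * x * (T * x) * T := by
          rw [sq, ← mul_assoc, hp]; noncomm_ring
      _ = x * T := by rw [hTx, mul_assoc a, ← sq, h.mul_sq]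
  · calc x * T * (a + b) * (x * T) = x * (T * a) * x * T := by
          rw [mul_assoc _ (a + b), hp]; noncomm_ring
      _ = x * T := by rw [hTa, h.mul_mul_self]
  · calc (a + b) ^ 2 * (x * T) = a ^ 2 * x * T + b * a * x * T := by
          rw [sq, mul_assoc, hp]; noncomm_ring
      _ = a * x * a * T := by rw [hba, h.sq_mul]; noncomm_ring
      _ = a * x * a + a * (x * a * x) * T * b := by nth_rewrite 1 [hT]; noncomm_ring
      _ = (a + b) * (x * T) * (a + b) := by rw [h.mul_mul_self, hpab]
  · have hdecomp : (a + b) - (a + b) * (x * T) * (a + b)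
        = (a - a * x * a) + (1 - a * x * T) * b := by
      rw [hpab]; noncomm_ring
    have hbp : b * (1 - a * x * T) = b := by
      rw [mul_sub, mul_one, ← mul_assoc, ← mul_assoc, hba, zero_mul, zero_mul, sub_zero]
    have hrq : (1 - a * x * T) * b * (a - a * x * a) = 0 := by
      rw [mul_assoc, mul_sub, hba, ← mul_assoc, ← mul_assoc, hba, zero_mul, zero_mul, sub_zero,
        mul_zero]
    rw [hdecomp]
    exact h.quasinilpotent.add_of_mul_eq_zero (Quasinilpotent.mul_comm (by rwa [hbp])) hrq

/-- If `x` is a generalized right Drazin inverse of `a`, `b` is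
quasinilpotent and `ba = 0`, then `y = x(1 + Σ_{n≥1} xⁿbⁿ)` is a generalized right
Drazin inverse of `a + b`. -/
theorem grd_perturbation
    {A : Type*} [NormedRing A] [NormedAlgebra ℂ A] [CompleteSpace A]
    (a x b : A)
    (h1 : a * x ^ 2 = x) (h2 : x * a * x = x) (h3 : a ^ 2 * x = a * x * a)
    (h4 : Quasinilpotent (a - a * x * a))
    (hb : Quasinilpotent b) (hba : b * a = 0) :
    (a + b) * (x * (1 + ∑' n : ℕ, x ^ (n + 1) * b ^ (n + 1))) ^ 2 =
        x * (1 + ∑' n : ℕ, x ^ (n + 1) * b ^ (n + 1)) ∧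
      (x * (1 + ∑' n : ℕ, x ^ (n + 1) * b ^ (n + 1))) * (a + b) *
          (x * (1 + ∑' n : ℕ, x ^ (n + 1) * b ^ (n + 1))) =
        x * (1 + ∑' n : ℕ, x ^ (n + 1) * b ^ (n + 1)) ∧
      (a + b) ^ 2 * (x * (1 + ∑' n : ℕ, x ^ (n + 1) * b ^ (n + 1))) =
        (a + b) * (x * (1 + ∑' n : ℕ, x ^ (n + 1) * b ^ (n + 1))) * (a + b) ∧
      Quasinilpotent
        ((a + b) - (a + b) * (x * (1 + ∑' n : ℕ, x ^ (n + 1) * b ^ (n + 1))) * (a + b)) := by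
  have hs := hb.summable_pow_mul_pow x
  have hy := IsGenRightDrazinInverse.add_of_eq_one_add_mul_mul ⟨h1, h2, h3, h4⟩ hb hba
    (tsum_pow_mul_pow_eq_one_add_mul_tsum_mul hs)
  rw [← tsum_pow_mul_pow_eq_one_add hs]
  exact ⟨hy.mul_sq, hy.mul_mul_self, hy.sq_mul, hy.quasinilpotent⟩
end

section
/- Let A be a Banach *-algebra with proper involution and a ∈ A. Then a admits a generalized right group decomposition (a = a₁ + a₂ with a₁*a₂ = a₂a₁ = 0, a₁ right group invertible, a₂ quasinilpotent) if and only if there exists x ∈ A such that x = ax², (a*a²x)* = a*a²x, and lim_{n→∞} ‖aⁿ − axaⁿ‖^{1/n} = 0. -/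
/-!
With `p = a x`, the two conditions are linked by `a₁ = a p`, `a₂ = a (1 - p)` and `y = x`.
Going forward, `a₂ y = a₂ a₁ y² = 0` makes `p = a₁ y`, and `(1 - p) aⁿ = (1 - p) a₂ⁿ` for `n ≥ 1`.
Going back, `x = a x²` gives `p = aⁿ xⁿ` for every `n ≥ 1`, so
`(1 - p) aᵏ p = ((1 - p) aⁿ) (aᵏ xⁿ)`; the first factor decays faster than any geometric
sequence, so `(1 - p) aᵏ p = 0` for all `k`. This makes `p` idempotent, `a₂ a₁ = 0` and
`a₂ⁿ⁺¹ = a (1 - p) aⁿ`, whence `a₂` is quasinilpotent; the self-adjointness of `a* a p`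
gives `a₁* a₂ = 0`.
-/

open Filter Topology

/-- `y` is a right group inverse of `b`: by² = y, b²y = byb = b. -/
def IsRightGroupInv {A : Type*} [NormedRing A] (b y : A) : Prop :=
  b * y ^ 2 = y ∧ b ^ 2 * y = b ∧ b * y * b = b

namespace Real

theorem rpow_one_div_natCast_le_iff {t ε : ℝ} (ht : 0 ≤ t) (hε : 0 ≤ ε) {n : ℕ} (hn : n ≠ 0) :
    t ^ (1 / (n : ℝ)) ≤ ε ↔ t ≤ ε ^ n := by
  rw [one_div, rpow_inv_le_iff_of_pos ht hε (by positivity), rpow_natCast]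

theorem tendsto_rpow_one_div_nhds_zero_iff {f : ℕ → ℝ} (hf : ∀ n, 0 ≤ f n) :
    Tendsto (fun n : ℕ => f n ^ (1 / (n : ℝ))) atTop (𝓝 0) ↔
      ∀ ε > 0, ∀ᶠ n in atTop, f n ≤ ε ^ n := by
  constructor
  · intro h ε hε
    filter_upwards [h.eventually_le_const hε, eventually_ne_atTop 0] with n hn hn0
    exact (rpow_one_div_natCast_le_iff (hf n) hε.le hn0).1 hn
  · intro h
    refine tendsto_order.2 ⟨fun b hb => .of_forall fun n => hb.trans_le (rpow_nonneg (hf n) _),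
      fun δ hδ => ?_⟩
    filter_upwards [h (δ / 2) (half_pos hδ), eventually_ne_atTop 0] with n hn hn0
    exact ((rpow_one_div_natCast_le_iff (hf n) (half_pos hδ).le hn0).2 hn).trans_lt
      (half_lt_self hδ)

theorem tendsto_rpow_one_div_nhds_zero_of_le_mul {f g : ℕ → ℝ} (hf : ∀ n, 0 ≤ f n)
    (hg₀ : ∀ n, 0 ≤ g n) (hg : Tendsto (fun n : ℕ => g n ^ (1 / (n : ℝ))) atTop (𝓝 0))
    (C : ℝ) (k : ℕ) (hfg : ∀ᶠ n in atTop, f (n + k) ≤ C * g n) :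
    Tendsto (fun n : ℕ => f n ^ (1 / (n : ℝ))) atTop (𝓝 0) := by
  rw [tendsto_rpow_one_div_nhds_zero_iff hf]
  intro ε hε
  have hC : ∀ᶠ n in atTop, C / ε ^ k ≤ 2 ^ n :=
    (tendsto_pow_atTop_atTop_of_one_lt one_lt_two).eventually_ge_atTop _
  have hshift : ∀ᶠ n in atTop, f (n + k) ≤ ε ^ (n + k) := by
    filter_upwards [hfg, (tendsto_rpow_one_div_nhds_zero_iff hg₀).1 hg (ε / 2) (half_pos hε),
      hC] with n hfn hgn hCn
    calc f (n + k) ≤ C * g n := hfn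
      _ ≤ (ε ^ k * 2 ^ n) * (ε / 2) ^ n := by
        gcongr
        · exact hg₀ n
        · exact (div_le_iff₀' (by positivity)).1 hCn
      _ = ε ^ (n + k) := by
        rw [mul_assoc, ← mul_pow, mul_div_cancel₀ _ two_ne_zero, pow_add, mul_comm]
  rw [← map_add_atTop_eq_nat k]
  exact eventually_map.2 hshift

theorem tendsto_mul_pow_nhds_zero_of_tendsto_rpow {f : ℕ → ℝ} (hf : ∀ n, 0 ≤ f n)
    (h : Tendsto (fun n : ℕ => f n ^ (1 / (n : ℝ))) atTop (𝓝 0)) (r : ℝ) (hr : 0 ≤ r) :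
    Tendsto (fun n => f n * r ^ n) atTop (𝓝 0) := by
  have hε : 0 < (2 * (r + 1))⁻¹ := by positivity
  refine squeeze_zero' (.of_forall fun n => mul_nonneg (hf n) (pow_nonneg hr n)) ?_
    (tendsto_pow_atTop_nhds_zero_of_lt_one (r := 1 / 2) (by norm_num) (by norm_num))
  filter_upwards [(tendsto_rpow_one_div_nhds_zero_iff hf).1 h _ hε] with n hn
  calc f n * r ^ n ≤ (2 * (r + 1))⁻¹ ^ n * r ^ n := by gcongr
    _ = ((2 * (r + 1))⁻¹ * r) ^ n := (mul_pow _ _ _).symm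
    _ ≤ (1 / 2) ^ n := by
      gcongr
      rw [inv_mul_le_iff₀ (by positivity)]
      linarith

end Real

section Ring

variable {R : Type*} [Ring R]

section Forward

variable {a₁ a₂ y : R}

theorem mul_eq_zero_of_mul_eq_zero_of_mul_sq_eq (h21 : a₂ * a₁ = 0) (hy : a₁ * y ^ 2 = y) :
    a₂ * y = 0 := by
  rw [← hy, ← mul_assoc, h21, zero_mul]

theorem add_mul_sq_eq (h21 : a₂ * a₁ = 0) (hy : a₁ * y ^ 2 = y) : (a₁ + a₂) * y ^ 2 = y := by
  rw [add_mul, sq y, ← mul_assoc a₂, mul_eq_zero_of_mul_eq_zero_of_mul_sq_eq h21 hy, zero_mul,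
    add_zero, ← sq, hy]

theorem add_sq_mul_eq (h21 : a₂ * a₁ = 0) (hy : a₁ * y ^ 2 = y) (hy₂ : a₁ ^ 2 * y = a₁) :
    (a₁ + a₂) ^ 2 * y = a₁ := by
  rw [sq, mul_assoc, add_mul a₁ a₂ y, mul_eq_zero_of_mul_eq_zero_of_mul_sq_eq h21 hy, add_zero,
    add_mul, ← mul_assoc, ← mul_assoc, h21, zero_mul, add_zero, ← sq, hy₂]

theorem isSelfAdjoint_star_add_mul_add_sq_mul [StarRing R] (h12 : star a₁ * a₂ = 0)
    (h21 : a₂ * a₁ = 0) (hy : a₁ * y ^ 2 = y) (hy₂ : a₁ ^ 2 * y = a₁) :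
    IsSelfAdjoint (star (a₁ + a₂) * (a₁ + a₂) ^ 2 * y) := by
  have h21' : star a₂ * a₁ = 0 := by simpa using congrArg star h12
  rw [mul_assoc, add_sq_mul_eq h21 hy hy₂, star_add, add_mul, h21', add_zero]
  exact .star_mul_self a₁

theorem mul_add_pow (h21 : a₂ * a₁ = 0) (n : ℕ) : a₂ * (a₁ + a₂) ^ n = a₂ ^ (n + 1) := by
  induction n with
  | zero => simp
  | succ n ih =>
    rw [pow_succ, ← mul_assoc, ih, mul_add, pow_succ a₂ n, mul_assoc, h21, mul_zero, zero_add,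
      ← pow_succ, ← pow_succ]

theorem add_pow_sub_mul_mul_add_pow (h21 : a₂ * a₁ = 0) (hy : a₁ * y ^ 2 = y)
    (hy₃ : a₁ * y * a₁ = a₁) {n : ℕ} (hn : n ≠ 0) :
    (a₁ + a₂) ^ n - (a₁ + a₂) * y * (a₁ + a₂) ^ n = (1 - a₁ * y) * a₂ ^ n := by
  obtain ⟨m, rfl⟩ := Nat.exists_eq_succ_of_ne_zero hn
  have hkill : (1 - a₁ * y) * a₁ = 0 := by rw [sub_mul, one_mul, hy₃, sub_self]
  rw [← one_sub_mul, add_mul a₁ a₂ y, mul_eq_zero_of_mul_eq_zero_of_mul_sq_eq h21 hy, add_zero,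
    pow_succ', ← mul_assoc, mul_add, hkill, zero_add, mul_assoc, mul_add_pow h21]

end Forward

section Converse

variable {a x p : R}

theorem pow_mul_pow_eq_mul (hx : a * x ^ 2 = x) {n : ℕ} (hn : n ≠ 0) : a ^ n * x ^ n = a * x := by
  obtain ⟨m, rfl⟩ := Nat.exists_eq_succ_of_ne_zero hn
  induction m with
  | zero => simp
  | succ m ih =>
    have hshift : a * x ^ (m + 2) = x ^ (m + 1) := by
      rw [add_comm m 2, pow_add, ← mul_assoc, hx, ← pow_succ']
    rw [pow_succ a (m + 1), mul_assoc, hshift, ih (Nat.succ_ne_zero m)]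

theorem mul_one_sub_mul_mul_eq_zero (h : ∀ k : ℕ, (1 - p) * a ^ k * p = 0) :
    a * (1 - p) * (a * p) = 0 := by
  rw [mul_assoc, ← mul_assoc (1 - p), ← pow_one a, h 1, mul_zero]

theorem mul_one_sub_pow_succ (h : ∀ k : ℕ, (1 - p) * a ^ k * p = 0) (n : ℕ) :
    (a * (1 - p)) ^ (n + 1) = a * ((1 - p) * a ^ n) := by
  induction n with
  | zero => simp
  | succ n ih =>
    rw [pow_succ, ih, mul_assoc, ← mul_assoc _ a, mul_assoc (1 - p) (a ^ n) a, ← pow_succ,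
      mul_one_sub, h, sub_zero]

theorem star_mul_mul_one_sub_eq_zero [StarRing R] (hsa : IsSelfAdjoint (star a * (a * p)))
    (hp : IsIdempotentElem p) : star (a * p) * (a * (1 - p)) = 0 := by
  have hswap : star (a * p) * a = star a * (a * p) := by
    simpa only [star_mul, star_star] using hsa.star_eq
  rw [← mul_assoc, hswap, mul_assoc, mul_assoc, hp.mul_one_sub_self, mul_zero, mul_zero]

end Converse

end Ring

section NormedRing

variable {A : Type*} [NormedRing A]

theorem eq_zero_of_eventually_eq_mul_mul_pow {z c x : A} {w : ℕ → A}
    (hw : Tendsto (fun n : ℕ => ‖w n‖ ^ (1 / (n : ℝ))) atTop (𝓝 0))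
    (h : ∀ᶠ n in atTop, z = w n * (c * x ^ n)) : z = 0 := by
  have hlim : Tendsto (fun n => ‖c‖ * (‖w n‖ * ‖x‖ ^ n)) atTop (𝓝 0) := by
    simpa using ((Real.tendsto_mul_pow_nhds_zero_of_tendsto_rpow (fun _ => norm_nonneg _) hw
      ‖x‖ (norm_nonneg x)).const_mul ‖c‖)
  refine norm_le_zero_iff.1 (ge_of_tendsto hlim ?_)
  filter_upwards [h, eventually_ne_atTop 0] with n hn hn0
  calc ‖z‖ ≤ ‖w n‖ * (‖c‖ * ‖x ^ n‖) := by
        rw [hn]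
        exact (norm_mul_le _ _).trans (by gcongr; exact norm_mul_le _ _)
    _ ≤ ‖w n‖ * (‖c‖ * ‖x‖ ^ n) := by gcongr; exact norm_pow_le' x (Nat.pos_of_ne_zero hn0)
    _ = ‖c‖ * (‖w n‖ * ‖x‖ ^ n) := by ring

theorem one_sub_mul_pow_mul_eq_zero {a x : A} (hx : a * x ^ 2 = x)
    (h : Tendsto (fun n : ℕ => ‖(1 - a * x) * a ^ n‖ ^ (1 / (n : ℝ))) atTop (𝓝 0)) (k : ℕ) :
    (1 - a * x) * a ^ k * (a * x) = 0 := by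
  refine eq_zero_of_eventually_eq_mul_mul_pow h (c := a ^ k) (x := x) ?_
  filter_upwards [eventually_ne_atTop 0] with n hn
  calc (1 - a * x) * a ^ k * (a * x) = (1 - a * x) * a ^ k * (a ^ n * x ^ n) := by
        rw [pow_mul_pow_eq_mul hx hn]
    _ = (1 - a * x) * a ^ n * (a ^ k * x ^ n) := by
        rw [mul_assoc, mul_assoc, ← mul_assoc (a ^ k), pow_mul_comm, mul_assoc]

theorem isRightGroupInv_mul_mul {a x : A} (hx : a * x ^ 2 = x) (hp : IsIdempotentElem (a * x))
    (h : ∀ k : ℕ, (1 - a * x) * a ^ k * (a * x) = 0) : IsRightGroupInv (a * (a * x)) x := by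
  have hpap : a * x * a * (a * x) = a * (a * x) := by
    simpa only [pow_one, sub_mul, one_mul, sub_eq_zero, eq_comm] using h 1
  have hpx : a * x * x = x := by rw [mul_assoc, ← sq, hx]
  refine ⟨?_, ?_, ?_⟩
  · rw [sq, ← mul_assoc, mul_assoc a (a * x) x, hpx, hpx]
  · rw [sq, mul_assoc, mul_assoc a (a * x) x, hpx, mul_assoc, hp.eq]
  · rw [mul_assoc a (a * x) x, hpx, ← mul_assoc, hpap]

theorem quasinilpotent_mul_one_sub {a p : A} (h : ∀ k : ℕ, (1 - p) * a ^ k * p = 0)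
    (hq : Tendsto (fun n : ℕ => ‖(1 - p) * a ^ n‖ ^ (1 / (n : ℝ))) atTop (𝓝 0)) :
    Quasinilpotent (a * (1 - p)) :=
  Real.tendsto_rpow_one_div_nhds_zero_of_le_mul (f := fun n => ‖(a * (1 - p)) ^ n‖)
    (fun _ => norm_nonneg _) (fun _ => norm_nonneg _) hq ‖a‖ 1
    (.of_forall fun n => by rw [mul_one_sub_pow_succ h]; exact norm_mul_le _ _)

end NormedRing

theorem generalized_right_group_decomposition_iff_general
    {A : Type*} [NormedRing A] [StarRing A] (a : A) :
    (∃ a₁ a₂ : A, a = a₁ + a₂ ∧ star a₁ * a₂ = 0 ∧ a₂ * a₁ = 0 ∧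
        (∃ y : A, IsRightGroupInv a₁ y) ∧ Quasinilpotent a₂) ↔
      (∃ x : A, x = a * x ^ 2 ∧ star (star a * a ^ 2 * x) = star a * a ^ 2 * x ∧
        Tendsto (fun n : ℕ => ‖a ^ n - a * x * a ^ n‖ ^ (1 / (n : ℝ))) atTop (𝓝 0)) := by
  constructor
  · rintro ⟨a₁, a₂, rfl, h12, h21, ⟨y, hy₁, hy₂, hy₃⟩, hq⟩
    refine ⟨y, (add_mul_sq_eq h21 hy₁).symm,
      (isSelfAdjoint_star_add_mul_add_sq_mul h12 h21 hy₁ hy₂).star_eq, ?_⟩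
    refine Real.tendsto_rpow_one_div_nhds_zero_of_le_mul (fun _ => norm_nonneg _)
      (fun _ => norm_nonneg _) hq ‖1 - a₁ * y‖ 0 ?_
    filter_upwards [eventually_ne_atTop 0] with n hn
    rw [add_zero, add_pow_sub_mul_mul_add_pow h21 hy₁ hy₃ hn]
    exact norm_mul_le _ _
  · rintro ⟨x, hx, hsa, hT⟩
    have hT' : Tendsto (fun n : ℕ => ‖(1 - a * x) * a ^ n‖ ^ (1 / (n : ℝ))) atTop (𝓝 0) := by
      simpa only [one_sub_mul] using hT
    have hkill := one_sub_mul_pow_mul_eq_zero hx.symm hT'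
    have hp : IsIdempotentElem (a * x) :=
      isIdempotentElem_iff_one_sub_mul_self.2 (by simpa only [pow_zero, mul_one] using hkill 0)
    have hsa' : IsSelfAdjoint (star a * (a * (a * x))) := by
      rw [isSelfAdjoint_iff]
      simpa only [sq, mul_assoc] using hsa
    refine ⟨a * (a * x), a * (1 - a * x), by rw [← mul_add, add_sub_cancel, mul_one],
      star_mul_mul_one_sub_eq_zero hsa' hp, mul_one_sub_mul_mul_eq_zero hkill,
      ⟨x, isRightGroupInv_mul_mul hx.symm hp hkill⟩, quasinilpotent_mul_one_sub hkill hT'⟩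

/-- `a` has a generalized right group decomposition iff there exists `x`
with x = ax², (a*a²x)* = a*a²x and ‖aⁿ − axaⁿ‖^{1/n} → 0. -/
theorem generalized_right_group_decomposition_iff
    {A : Type*} [NormedRing A] [StarRing A] [NormedAlgebra ℂ A] [CompleteSpace A]
    (hproper : ∀ x : A, star x * x = 0 → x = 0) (a : A) :
    (∃ a₁ a₂ : A, a = a₁ + a₂ ∧ star a₁ * a₂ = 0 ∧ a₂ * a₁ = 0 ∧
        (∃ y : A, IsRightGroupInv a₁ y) ∧ Quasinilpotent a₂) ↔
      (∃ x : A, x = a * x ^ 2 ∧ star (star a * a ^ 2 * x) = star a * a ^ 2 * x ∧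
        Tendsto (fun n : ℕ => ‖a ^ n - a * x * a ^ n‖ ^ (1 / (n : ℝ))) atTop (𝓝 0)) :=
  generalized_right_group_decomposition_iff_general a
end

section
/- Let A be a Banach *-algebra with proper involution and a ∈ A. Then a is generalized right group invertible if and only if there exists an idempotent p ∈ A such that (1−p)a(1−p) is right invertible in the corner algebra (1−p)A(1−p), (a*ap)* = a*ap, and pa = pap is quasinilpotent. -/
open Filter Topology

/-- `x` is a generalized right group inverse of `a`. -/
def IsGRGInv {A : Type*} [NormedRing A] [StarRing A] (a x : A) : Prop :=
  x = a * x ^ 2 ∧ star (star a * a ^ 2 * x) = star a * a ^ 2 * x ∧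
    Tendsto (fun n : ℕ => ‖a ^ n - a * x * a ^ n‖ ^ (1 / (n : ℝ))) atTop (𝓝 0)

theorem mul_pow_succ_of_mul_eq_mul_mul {M : Type*} [Monoid M] {p a : M} (h : p * a = p * a * p)
    (n : ℕ) : (p * a) ^ (n + 1) = p * a ^ (n + 1) := by
  induction n with
  | zero => rw [pow_one, pow_one]
  | succ n ih => rw [pow_succ', ih, ← mul_assoc, ← h, mul_assoc, ← pow_succ']

theorem pow_succ_mul_pow_succ_of_eq_mul_sq {M : Type*} [Monoid M] {a x : M} (h : x = a * x ^ 2)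
    (n : ℕ) : a ^ (n + 1) * x ^ (n + 1) = a * x := by
  induction n with
  | zero => rw [pow_one, pow_one]
  | succ n ih =>
    have hx : a * x ^ (n + 1 + 1) = x ^ (n + 1) :=
      calc a * x ^ (n + 1 + 1) = a * x ^ 2 * x ^ n := by rw [mul_assoc, ← pow_add, add_comm 2 n]
        _ = x ^ (n + 1) := by rw [← h, pow_succ']
    rw [← ih, pow_succ a (n + 1), mul_assoc, hx]

theorem isSelfAdjoint_mul_one_sub_iff {R : Type*} [Ring R] [StarRing R] {s q : R}
    (hs : IsSelfAdjoint s) : IsSelfAdjoint (s * (1 - q)) ↔ IsSelfAdjoint (s * q) := by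
  rw [mul_sub, mul_one]
  refine ⟨fun h => ?_, hs.sub⟩
  simpa only [sub_sub_cancel] using hs.sub h

theorem Real.tendsto_mul_pow_of_tendsto_rpow_one_div {r : ℕ → ℝ} (hr : ∀ n, 0 ≤ r n)
    (h : Tendsto (fun n : ℕ => r n ^ (1 / (n : ℝ))) atTop (𝓝 0)) {M : ℝ} (hM : 0 ≤ M) :
    Tendsto (fun n : ℕ => r n * M ^ n) atTop (𝓝 0) := by
  have hsmall : ∀ᶠ n : ℕ in atTop, r n ^ (1 / (n : ℝ)) * M < 1 / 2 := by
    have hlim := h.mul_const M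
    rw [zero_mul] at hlim
    exact hlim.eventually_lt_const (by norm_num)
  refine squeeze_zero' (Eventually.of_forall fun n => mul_nonneg (hr n) (pow_nonneg hM n)) ?_
    (tendsto_pow_atTop_nhds_zero_of_lt_one (by norm_num : (0 : ℝ) ≤ 1 / 2) (by norm_num))
  filter_upwards [hsmall, eventually_ge_atTop 1] with n hn hn1
  have hroot : (r n ^ (1 / (n : ℝ))) ^ n = r n := by
    rw [← Real.rpow_natCast, ← Real.rpow_mul (hr n),
      one_div_mul_cancel (by exact_mod_cast (by omega : n ≠ 0)), Real.rpow_one]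
  calc r n * M ^ n = (r n ^ (1 / (n : ℝ)) * M) ^ n := by rw [mul_pow, hroot]
    _ ≤ (1 / 2) ^ n := pow_le_pow_left₀ (mul_nonneg (Real.rpow_nonneg (hr n) _) hM) hn.le n

section NormedRing

variable {A : Type*} [NormedRing A]

theorem eq_zero_of_eventually_eq_mul_pow {d : ℕ → A}
    (hd : Tendsto (fun n : ℕ => ‖d n‖ ^ (1 / (n : ℝ))) atTop (𝓝 0)) (k : ℕ) {c y : A}
    (h : ∀ᶠ n in atTop, c = d (n + k) * y ^ n) : c = 0 := by
  set M := ‖y‖ + 1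
  have hlim : Tendsto (fun n : ℕ => ‖d (n + k)‖ * M ^ (n + k)) atTop (𝓝 0) :=
    (Real.tendsto_mul_pow_of_tendsto_rpow_one_div (fun n => norm_nonneg _) hd
      (by positivity)).comp (tendsto_add_atTop_nat k)
  refine norm_le_zero_iff.mp (ge_of_tendsto hlim ?_)
  filter_upwards [h, eventually_ge_atTop 1] with n hc hn
  calc ‖c‖ ≤ ‖d (n + k)‖ * ‖y ^ n‖ := hc ▸ norm_mul_le _ _
    _ ≤ ‖d (n + k)‖ * ‖y‖ ^ n := by gcongr; exact norm_pow_le' y hn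
    _ ≤ ‖d (n + k)‖ * M ^ (n + k) := by
      gcongr
      calc ‖y‖ ^ n ≤ M ^ n := by gcongr; linarith
        _ ≤ M ^ (n + k) := pow_le_pow_right₀ (by linarith [norm_nonneg y]) (by omega)

theorem quasinilpotent_mul_iff {p a : A} (h : p * a = p * a * p) :
    Quasinilpotent (p * a) ↔
      Tendsto (fun n : ℕ => ‖p * a ^ n‖ ^ (1 / (n : ℝ))) atTop (𝓝 0) := by
  refine tendsto_congr' ?_
  filter_upwards [eventually_ge_atTop 1] with n hn
  obtain ⟨m, rfl⟩ := Nat.exists_eq_add_of_le' hn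
  rw [mul_pow_succ_of_mul_eq_mul_mul h]

end NormedRing

section StarRing

variable {A : Type*} [NormedRing A] [StarRing A]

def IsGRGIdempotent (a p : A) : Prop :=
  p * p = p ∧
    (∃ v : A, ((1 - p) * a * (1 - p)) * ((1 - p) * v * (1 - p)) = 1 - p) ∧
    star (star a * a * p) = star a * a * p ∧
    p * a = p * a * p ∧ Quasinilpotent (p * a)

theorem IsGRGInv.isGRGIdempotent_one_sub_mul {a x : A} (h : IsGRGInv a x) :
    IsGRGIdempotent a (1 - a * x) := by
  obtain ⟨hx, hstar, hlim⟩ := h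
  have hex : a * x * x = x := by rw [mul_assoc, ← sq, ← hx]
  have hstar_e : star a * a ^ 2 * x = star a * a * (a * x) := by rw [sq]; simp only [mul_assoc]
  generalize he_def : a * x = e at hex hstar_e hlim
  have hpow (n : ℕ) : a ^ (n + 1) * x ^ (n + 1) = e :=
    he_def ▸ pow_succ_mul_pow_succ_of_eq_mul_sq hx n
  have hd : Tendsto (fun n : ℕ => ‖(1 - e) * a ^ n‖ ^ (1 / (n : ℝ))) atTop (𝓝 0) := by
    simpa only [sub_mul, one_mul] using hlim
  have he : IsIdempotentElem e := by
    refine isIdempotentElem_iff_one_sub_mul_self.mpr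
      (eq_zero_of_eventually_eq_mul_pow hd 0 (y := x) ?_)
    filter_upwards [eventually_ge_atTop 1] with n hn
    obtain ⟨m, rfl⟩ := Nat.exists_eq_add_of_le' hn
    rw [add_zero, mul_assoc, hpow]
  have hpae : (1 - e) * a * e = 0 := by
    refine eq_zero_of_eventually_eq_mul_pow hd 1 (y := x) ?_
    filter_upwards [eventually_ge_atTop 1] with n hn
    obtain ⟨m, rfl⟩ := Nat.exists_eq_add_of_le' hn
    rw [← hpow m, pow_succ' a (m + 1)]
    simp only [mul_assoc]
  have hpa : (1 - e) * a = (1 - e) * a * (1 - e) := by rw [mul_sub, mul_one, hpae, sub_zero]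
  refine ⟨he.one_sub, ⟨x, ?_⟩, ?_, hpa, (quasinilpotent_mul_iff hpa).mpr hd⟩
  · rw [sub_sub_cancel]
    calc e * a * e * (e * x * e) = e * a * (e * e * x) * e := by simp only [mul_assoc]
      _ = e * a * x * e := by rw [he.eq, hex]
      _ = e := by rw [mul_assoc e a x, he_def, he.eq, he.eq]
  · exact (isSelfAdjoint_mul_one_sub_iff (IsSelfAdjoint.star_mul_self a)).mpr (hstar_e ▸ hstar)

theorem IsGRGIdempotent.exists_isGRGInv {a p : A} (h : IsGRGIdempotent a p) :
    ∃ x, IsGRGInv a x := by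
  obtain ⟨hp, ⟨v, hv⟩, hstar, hpa, hqn⟩ := h
  set q := 1 - p
  set w := q * v * q
  have hq : IsIdempotentElem q := IsIdempotentElem.one_sub hp
  have hqw : q * w = w := by simp only [w, ← mul_assoc, hq.eq]
  have hqaq : q * a * q = a * q := by
    have hpaq : p * a * q = 0 := by rw [mul_sub, mul_one, ← hpa, sub_self]
    calc q * a * q = a * q - p * a * q := by simp only [q, sub_mul, one_mul]
      _ = a * q := by rw [hpaq, sub_zero]
  have haw : a * w = q := by rw [← hqw, ← mul_assoc, ← hqaq, hv]
  refine ⟨w, ?_, ?_, ?_⟩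
  · calc w = a * w * w := by rw [haw, hqw]
      _ = a * w ^ 2 := by rw [sq, mul_assoc]
  · have hsq : star a * a ^ 2 * w = star a * a * q := by rw [sq, ← haw]; simp only [mul_assoc]
    rw [hsq]
    exact (isSelfAdjoint_mul_one_sub_iff (IsSelfAdjoint.star_mul_self a)).mpr hstar
  · have hdiff (n : ℕ) : a ^ n - a * w * a ^ n = p * a ^ n := by
      rw [haw, sub_mul, one_mul, sub_sub_cancel]
    simpa only [hdiff] using (quasinilpotent_mul_iff hpa).mp hqn

end StarRing

theorem grg_iff_idempotent_general
    {A : Type*} [NormedRing A] [StarRing A] (a : A) :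
    (∃ x : A, IsGRGInv a x) ↔
      (∃ p : A, p * p = p ∧
        (∃ v : A, ((1 - p) * a * (1 - p)) * ((1 - p) * v * (1 - p)) = 1 - p) ∧
        star (star a * a * p) = star a * a * p ∧
        p * a = p * a * p ∧ Quasinilpotent (p * a)) :=
  ⟨fun ⟨_, hx⟩ => ⟨_, hx.isGRGIdempotent_one_sub_mul⟩,
    fun ⟨_, hp⟩ => IsGRGIdempotent.exists_isGRGInv hp⟩

/-- `a` is generalized right group invertible iff there is an idempotent
`p` with (1−p)a(1−p) right invertible in the corner algebra (1−p)A(1−p),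
(a*ap)* = a*ap, and pa = pap quasinilpotent. -/
theorem grg_iff_idempotent
    {A : Type*} [NormedRing A] [StarRing A] [NormedAlgebra ℂ A] [CompleteSpace A]
    (hproper : ∀ x : A, star x * x = 0 → x = 0) (a : A) :
    (∃ x : A, IsGRGInv a x) ↔
      (∃ p : A, p * p = p ∧
        (∃ v : A, ((1 - p) * a * (1 - p)) * ((1 - p) * v * (1 - p)) = 1 - p) ∧
        star (star a * a * p) = star a * a * p ∧
        p * a = p * a * p ∧ Quasinilpotent (p * a)) :=
  grg_iff_idempotent_general a
end

section
/- Let A be a Banach algebra and a ∈ A. If a has a right group inverse x (ax² = x = xax, a²x = axa = a) and a has a (1,3)-inverse a^{(1,3)} (a a^{(1,3)} a = a, (a a^{(1,3)})* = a a^{(1,3)}), then z = x a a^{(1,3)} satisfies az² = z, (az)* = az, and aza = a; i.e., a has a right core inverse. -/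
open Filter Topology

/-- If `a` has a right group inverse `x` (ax² = x = xax, a²x = axa = a)
and a (1,3)-inverse `b` (aba = a, (ab)* = ab), then z = xab is a right core inverse
of `a`: az² = z, (az)* = az, aza = a. -/
theorem right_core_inverse_of_right_group_and_13
    {A : Type*} [NormedRing A] [StarRing A] [NormedAlgebra ℂ A] [CompleteSpace A]
    (a x b : A)
    (hx1 : a * x ^ 2 = x) (hx2 : x * a * x = x) (hx3 : a ^ 2 * x = a * x * a)
    (hx4 : a * x * a = a)
    (hb1 : a * b * a = a) (hb2 : star (a * b) = a * b) :
    a * (x * a * b) ^ 2 = x * a * b ∧ star (a * (x * a * b)) = a * (x * a * b) ∧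
      a * (x * a * b) * a = a := by
  have haz : a * (x * a * b) = a * b := by
    calc a * (x * a * b) = (a * x * a) * b := by noncomm_ring
    _ = a * b := by rw [hx4]
  have habx : a * b * x = x := by
    calc a * b * x = a * b * (a * x ^ 2) := by rw [hx1]
    _ = (a * b * a) * x ^ 2 := by noncomm_ring
    _ = a * x ^ 2 := by rw [hb1]
    _ = x := hx1
  refine ⟨?_, ?_, ?_⟩
  · calc a * (x * a * b) ^ 2 = (a * (x * a * b)) * (x * a * b) := by noncomm_ring
    _ = (a * b) * (x * a * b) := by rw [haz]
    _ = (a * b * x) * (a * b) := by noncomm_ring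
    _ = x * (a * b) := by rw [habx]
    _ = x * a * b := by noncomm_ring
  · rw [haz, hb2]
  · calc a * (x * a * b) * a = (a * x * a) * b * a := by noncomm_ring
    _ = a * b * a := by rw [hx4]
    _ = a := hb1
end
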